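/- arXiv:2105.05356 — 4 statements merged into one kernel-verified Lean document; each statement's English description precedes it below -/
import Mathlib

section
/- For the fractional kernel K(u,s) = η(u-s)^{H-1/2} with H ∈ (0,1), there exists a constant c > 0 (depending on η, H, T) such that for all T ≤ u₁ < u₂, (∫_0^T (K(u₁,s) - K(u₂,s))² ds)^{1/2} ≤ c(u₂ - u₁)(u₂ - T)^{H-1}. -/
/-!
Substituting `x = u₁ - s` and writing `δ = u₂ - u₁`, `p = H - 1/2 ∈ (-1/2, 1/2)`, the squared norm
is `η² ∫_{u₁-T}^{u₁} (x^p - (x+δ)^p)² dx`. Beyond `a = max (u₁ - T) δ` the mean value theorem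
bounds the integrand by `p² δ² x^(2p-2)`, whose integral is `O(δ² a^(2p-1))`; below `a` (only when
`u₁ - T < δ = a`) the crude bound `x^(2p) + (x+δ)^(2p)` integrates to `O(δ^(2p+1)) = O(δ² a^(2p-1))`.
Finally `a ≥ (u₂ - T)/2` and `2p - 1 = 2H - 2 ≤ 0`.
-/

open Real MeasureTheory Set intervalIntegral

lemma sq_rpow_eq_rpow_two_mul {x : ℝ} (hx : 0 ≤ x) (p : ℝ) : (x ^ p) ^ 2 = x ^ (2 * p) := by
  rw [mul_comm]; exact_mod_cast (rpow_mul_natCast hx p 2).symm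

lemma rpow_sub_rpow_add_sq_le_rpow_add_rpow {p x δ : ℝ} (hx : 0 ≤ x) (hδ : 0 ≤ δ) :
    (x ^ p - (x + δ) ^ p) ^ 2 ≤ x ^ (2 * p) + (x + δ) ^ (2 * p) := by
  have hxδ : 0 ≤ x + δ := by linarith
  rw [← sq_rpow_eq_rpow_two_mul hx, ← sq_rpow_eq_rpow_two_mul hxδ]
  nlinarith [mul_nonneg (rpow_nonneg hx p) (rpow_nonneg hxδ p)]

lemma abs_rpow_add_sub_rpow_le {p x δ : ℝ} (hp : p ≤ 1) (hx : 0 < x) (hδ : 0 ≤ δ) :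
    |(x + δ) ^ p - x ^ p| ≤ |p| * x ^ (p - 1) * δ := by
  have hderiv : ∀ y ∈ Icc x (x + δ),
      HasDerivWithinAt (fun y : ℝ => y ^ p) (p * y ^ (p - 1)) (Icc x (x + δ)) y :=
    fun y hy => (hasDerivAt_rpow_const (Or.inl (hx.trans_le hy.1).ne')).hasDerivWithinAt
  have hbound : ∀ y ∈ Icc x (x + δ), ‖p * y ^ (p - 1)‖ ≤ |p| * x ^ (p - 1) := fun y hy => by
    rw [norm_mul, norm_eq_abs, norm_eq_abs, abs_of_nonneg (rpow_nonneg (hx.le.trans hy.1) _)]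
    exact mul_le_mul_of_nonneg_left (rpow_le_rpow_of_nonpos hx hy.1 (by linarith)) (abs_nonneg p)
  simpa [norm_eq_abs, abs_of_nonneg hδ] using
    (convex_Icc x (x + δ)).norm_image_sub_le_of_norm_hasDerivWithin_le hderiv hbound
      (left_mem_Icc.2 (by linarith)) (right_mem_Icc.2 (by linarith))

lemma rpow_sub_rpow_add_sq_le_mul_rpow {p x δ : ℝ} (hp : p ≤ 1) (hx : 0 < x) (hδ : 0 ≤ δ) :
    (x ^ p - (x + δ) ^ p) ^ 2 ≤ p ^ 2 * δ ^ 2 * x ^ (2 * p - 2) := by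
  have h := pow_le_pow_left₀ (abs_nonneg _) (abs_rpow_add_sub_rpow_le hp hx hδ) 2
  rw [sq_abs, ← neg_sub, neg_sq] at h
  refine h.trans_eq ?_
  rw [mul_pow, mul_pow, sq_abs, sq_rpow_eq_rpow_two_mul hx.le]
  ring_nf

lemma intervalIntegrable_add_rpow {q : ℝ} (hq : -1 < q) (δ c d : ℝ) :
    IntervalIntegrable (fun x => (x + δ) ^ q) volume c d := by
  simpa using (intervalIntegrable_rpow' (a := c + δ) (b := d + δ) hq).comp_add_right δ

lemma intervalIntegrable_rpow_sub_rpow_add_sq {p δ c d : ℝ} (hp : -1 / 2 < p) (hδ : 0 ≤ δ)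
    (hc : 0 ≤ c) (hcd : c ≤ d) :
    IntervalIntegrable (fun x => (x ^ p - (x + δ) ^ p) ^ 2) volume c d := by
  have hq : -1 < 2 * p := by linarith
  have hdom : IntervalIntegrable (fun x => x ^ (2 * p) + (x + δ) ^ (2 * p)) volume c d :=
    (intervalIntegrable_rpow' hq).add (intervalIntegrable_add_rpow hq δ c d)
  have hmeas : AEStronglyMeasurable (fun x : ℝ => (x ^ p - (x + δ) ^ p) ^ 2)
      (volume.restrict (uIoc c d)) :=
    (by fun_prop : Measurable fun x : ℝ => (x ^ p - (x + δ) ^ p) ^ 2).aestronglyMeasurable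
  refine hdom.mono_fun' hmeas (ae_restrict_of_forall_mem measurableSet_uIoc fun x hx => ?_)
  rw [uIoc_of_le hcd] at hx
  dsimp only
  rw [norm_of_nonneg (sq_nonneg _)]
  exact rpow_sub_rpow_add_sq_le_rpow_add_rpow (hc.trans hx.1.le) hδ

lemma integral_rpow_le_of_lt_neg_one {q c d : ℝ} (hq : q < -1) (hc : 0 < c) (hcd : c ≤ d) :
    ∫ x in c..d, x ^ q ≤ c ^ (q + 1) / -(q + 1) := by
  rw [integral_rpow (Or.inr ⟨hq.ne, notMem_uIcc_of_lt hc (hc.trans_le hcd)⟩), ← neg_div_neg_eq,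
    neg_sub]
  exact div_le_div_of_nonneg_right (by linarith [rpow_nonneg (hc.le.trans hcd) (q + 1)])
    (by linarith)

lemma integral_rpow_sub_rpow_add_sq_le_of_le_shift {p δ c d : ℝ} (hp : -1 / 2 < p) (hc : 0 ≤ c)
    (hcd : c ≤ d) (hdδ : d ≤ δ) :
    ∫ x in c..d, (x ^ p - (x + δ) ^ p) ^ 2 ≤ 2 ^ (2 * p + 2) / (2 * p + 1) * δ ^ (2 * p + 1) := by
  have hq : -1 < 2 * p := by linarith
  have hδ : 0 ≤ δ := hc.trans (hcd.trans hdδ)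
  have hnonneg : 0 ≤ᵐ[volume.restrict (Ioc 0 (2 * δ))] fun x : ℝ => x ^ (2 * p) :=
    ae_restrict_of_forall_mem measurableSet_Ioc fun x hx => rpow_nonneg hx.1.le _
  have hwhole : IntervalIntegrable (fun x : ℝ => x ^ (2 * p)) volume 0 (2 * δ) :=
    intervalIntegrable_rpow' hq
  calc ∫ x in c..d, (x ^ p - (x + δ) ^ p) ^ 2
      ≤ ∫ x in c..d, (x ^ (2 * p) + (x + δ) ^ (2 * p)) :=
        integral_mono_on hcd (intervalIntegrable_rpow_sub_rpow_add_sq hp hδ hc hcd)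
          ((intervalIntegrable_rpow' hq).add (intervalIntegrable_add_rpow hq δ c d))
          fun x hx => rpow_sub_rpow_add_sq_le_rpow_add_rpow (hc.trans hx.1) hδ
    _ = (∫ x in c..d, x ^ (2 * p)) + ∫ x in c + δ..d + δ, x ^ (2 * p) := by
        rw [integral_add (intervalIntegrable_rpow' hq) (intervalIntegrable_add_rpow hq δ c d),
          integral_comp_add_right (fun x => x ^ (2 * p))]
    _ ≤ (∫ x in 0..2 * δ, x ^ (2 * p)) + ∫ x in 0..2 * δ, x ^ (2 * p) := by
        gcongr ?_ + ?_
        · exact integral_mono_interval hc hcd (by linarith) hnonneg hwhole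
        · exact integral_mono_interval (by linarith) (by linarith) (by linarith) hnonneg hwhole
    _ = 2 ^ (2 * p + 2) / (2 * p + 1) * δ ^ (2 * p + 1) := by
        rw [integral_rpow (Or.inl hq), zero_rpow (by linarith), mul_rpow zero_le_two hδ,
          show 2 * p + 2 = 2 * p + 1 + 1 by ring, rpow_add_one two_ne_zero (2 * p + 1)]
        ring

lemma integral_rpow_sub_rpow_add_sq_le_of_pos {p δ c d : ℝ} (hp : p < 1 / 2) (hδ : 0 ≤ δ)
    (hc : 0 < c) (hcd : c ≤ d) :
    ∫ x in c..d, (x ^ p - (x + δ) ^ p) ^ 2 ≤ p ^ 2 / (1 - 2 * p) * δ ^ 2 * c ^ (2 * p - 1) := by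
  have hpos : ∀ x ∈ uIcc c d, 0 < x := fun x hx =>
    hc.trans_le (by rw [uIcc_of_le hcd] at hx; exact hx.1)
  have hcont : ContinuousOn (fun x : ℝ => (x ^ p - (x + δ) ^ p) ^ 2) (uIcc c d) := by
    have hne : ∀ x ∈ uIcc c d, x ≠ 0 ∨ 0 ≤ p := fun x hx => Or.inl (hpos x hx).ne'
    have hne' : ∀ x ∈ uIcc c d, x + δ ≠ 0 ∨ 0 ≤ p := fun x hx => Or.inl (by linarith [hpos x hx])
    exact ((continuousOn_id.rpow_const hne).sub
      ((continuousOn_id.add continuousOn_const).rpow_const hne')).pow 2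
  calc ∫ x in c..d, (x ^ p - (x + δ) ^ p) ^ 2
      ≤ ∫ x in c..d, p ^ 2 * δ ^ 2 * x ^ (2 * p - 2) :=
        integral_mono_on hcd hcont.intervalIntegrable
          ((intervalIntegrable_rpow (Or.inr (fun h => (hpos 0 h).false))).const_mul _)
          fun x hx => rpow_sub_rpow_add_sq_le_mul_rpow (by linarith) (hc.trans_le hx.1) hδ
    _ = p ^ 2 * δ ^ 2 * ∫ x in c..d, x ^ (2 * p - 2) := integral_const_mul _ _
    _ ≤ p ^ 2 * δ ^ 2 * (c ^ (2 * p - 2 + 1) / -(2 * p - 2 + 1)) := by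
        gcongr
        exact integral_rpow_le_of_lt_neg_one (by linarith) hc hcd
    _ = p ^ 2 / (1 - 2 * p) * δ ^ 2 * c ^ (2 * p - 1) := by
        rw [show 2 * p - 2 + 1 = 2 * p - 1 by ring, show -(2 * p - 1) = 1 - 2 * p by ring]
        ring

lemma integral_rpow_sub_rpow_add_sq_le {p δ m b : ℝ} (hp₀ : -1 / 2 < p) (hp₁ : p < 1 / 2)
    (hδ : 0 < δ) (hm : 0 ≤ m) (hmb : m ≤ b) :
    ∫ x in m..b, (x ^ p - (x + δ) ^ p) ^ 2
      ≤ (p ^ 2 / (1 - 2 * p) + 2 ^ (2 * p + 2) / (2 * p + 1)) * δ ^ 2 * max m δ ^ (2 * p - 1) := by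
  have hfar : 0 ≤ p ^ 2 / (1 - 2 * p) := div_nonneg (sq_nonneg p) (by linarith)
  have hnear : 0 ≤ 2 ^ (2 * p + 2) / (2 * p + 1) := div_nonneg (by positivity) (by linarith)
  have hδ_rpow : δ ^ (2 * p + 1) = δ ^ 2 * δ ^ (2 * p - 1) := by
    rw [← rpow_two, ← rpow_add hδ]; ring_nf
  rcases le_total δ m with hδm | hmδ
  · have hm_pos : 0 < m := hδ.trans_le hδm
    have h := integral_rpow_sub_rpow_add_sq_le_of_pos hp₁ hδ.le hm_pos hmb
    have : 0 ≤ 2 ^ (2 * p + 2) / (2 * p + 1) * δ ^ 2 * m ^ (2 * p - 1) := by positivity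
    rw [max_eq_left hδm]
    linarith
  · rw [max_eq_right hmδ]
    have : 0 ≤ p ^ 2 / (1 - 2 * p) * δ ^ 2 * δ ^ (2 * p - 1) := by positivity
    rcases le_total b δ with hbδ | hδb
    · have h := integral_rpow_sub_rpow_add_sq_le_of_le_shift hp₀ hm hmb hbδ
      rw [hδ_rpow] at h
      linarith
    · have h₁ := integral_rpow_sub_rpow_add_sq_le_of_le_shift hp₀ hm hmδ le_rfl
      have h₂ := integral_rpow_sub_rpow_add_sq_le_of_pos hp₁ hδ.le hδ hδb
      rw [hδ_rpow] at h₁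
      rw [← integral_add_adjacent_intervals
        (intervalIntegrable_rpow_sub_rpow_add_sq hp₀ hδ.le hm hmδ)
        (intervalIntegrable_rpow_sub_rpow_add_sq hp₀ hδ.le hδ.le hδb)]
      linarith

lemma rpow_le_two_rpow_neg_mul_rpow_of_le_two_mul {q a s : ℝ} (hq : q ≤ 0) (hs : 0 < s)
    (hsa : s ≤ 2 * a) : a ^ q ≤ 2 ^ (-q) * s ^ q :=
  calc a ^ q ≤ (s / 2) ^ q := rpow_le_rpow_of_nonpos (by positivity) (by linarith) hq
    _ = 2 ^ (-q) * s ^ q := by rw [div_rpow hs.le zero_le_two, rpow_neg zero_le_two]; ring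

lemma exists_integral_rpow_sub_rpow_add_sq_le {p : ℝ} (hp₀ : -1 / 2 < p) (hp₁ : p < 1 / 2) :
    ∃ C > 0, ∀ δ m b : ℝ, 0 < δ → 0 ≤ m → m ≤ b →
      ∫ x in m..b, (x ^ p - (x + δ) ^ p) ^ 2 ≤ (C * δ * (m + δ) ^ (p - 1 / 2)) ^ 2 := by
  set K := p ^ 2 / (1 - 2 * p) + 2 ^ (2 * p + 2) / (2 * p + 1)
  have hK : 0 < K :=
    add_pos_of_nonneg_of_pos (div_nonneg (sq_nonneg p) (by linarith))
      (div_pos (by positivity) (by linarith))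
  refine ⟨√(K * 2 ^ (-(2 * p - 1))), by positivity, fun δ m b hδ hm hmb => ?_⟩
  have hmax : max m δ ^ (2 * p - 1) ≤ 2 ^ (-(2 * p - 1)) * (m + δ) ^ (2 * p - 1) :=
    rpow_le_two_rpow_neg_mul_rpow_of_le_two_mul (by linarith) (by positivity)
      (by linarith [le_max_left m δ, le_max_right m δ])
  calc ∫ x in m..b, (x ^ p - (x + δ) ^ p) ^ 2 ≤ K * δ ^ 2 * max m δ ^ (2 * p - 1) :=
        integral_rpow_sub_rpow_add_sq_le hp₀ hp₁ hδ hm hmb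
    _ ≤ K * δ ^ 2 * (2 ^ (-(2 * p - 1)) * (m + δ) ^ (2 * p - 1)) := by gcongr
    _ = (√(K * 2 ^ (-(2 * p - 1))) * δ * (m + δ) ^ (p - 1 / 2)) ^ 2 := by
        rw [mul_pow, mul_pow, sq_sqrt (by positivity), sq_rpow_eq_rpow_two_mul (by linarith)]
        ring_nf

/-- L² Lipschitz-type estimate for slices of the fractional kernel
`K(u,s) = η (u-s)^(H-1/2)`, `H ∈ (0,1)`: there is `c > 0` such that for all
`T ≤ u₁ < u₂`, `‖K(u₁,·) - K(u₂,·)‖_{L²(0,T)} ≤ c (u₂-u₁) (u₂-T)^(H-1)`. -/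
theorem kernel_L2_lipschitz (H η T : ℝ) (hH : H ∈ Set.Ioo (0 : ℝ) 1)
    (hη : 0 < η) (hT : 0 < T) :
    ∃ c > 0, ∀ u₁ u₂ : ℝ, T ≤ u₁ → u₁ < u₂ →
      (∫ s in (0 : ℝ)..T,
          (η * (u₁ - s) ^ (H - 1/2) - η * (u₂ - s) ^ (H - 1/2)) ^ 2) ^ ((1 : ℝ)/2)
        ≤ c * (u₂ - u₁) * (u₂ - T) ^ (H - 1) := by
  obtain ⟨C, hC, hbound⟩ :=
    exists_integral_rpow_sub_rpow_add_sq_le (p := H - 1 / 2) (by linarith [hH.1])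
      (by linarith [hH.2])
  refine ⟨η * C, by positivity, fun u₁ u₂ hTu₁ hu₁₂ => ?_⟩
  have hsubst : ∫ s in (0 : ℝ)..T, (η * (u₁ - s) ^ (H - 1/2) - η * (u₂ - s) ^ (H - 1/2)) ^ 2
      = η ^ 2 * ∫ x in u₁ - T..u₁, (x ^ (H - 1/2) - (x + (u₂ - u₁)) ^ (H - 1/2)) ^ 2 := by
    have hcomp := integral_comp_sub_left (a := 0) (b := T)
      (fun x => η ^ 2 * (x ^ (H - 1/2) - (x + (u₂ - u₁)) ^ (H - 1/2)) ^ 2) u₁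
    rw [sub_zero] at hcomp
    rw [← intervalIntegral.integral_const_mul, ← hcomp]
    refine integral_congr fun s _ => ?_
    simp only [sub_add_sub_cancel']
    ring
  have hI := hbound (u₂ - u₁) (u₁ - T) u₁ (by linarith) (by linarith) (by linarith)
  have hM : 0 ≤ (u₂ - T) ^ (H - 1) := rpow_nonneg (by linarith) _
  rw [← sqrt_eq_rpow, sqrt_le_left (mul_nonneg (mul_nonneg (mul_pos hη hC).le (by linarith)) hM), hsubst]
  calc η ^ 2 * ∫ x in u₁ - T..u₁, (x ^ (H - 1/2) - (x + (u₂ - u₁)) ^ (H - 1/2)) ^ 2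
      ≤ η ^ 2 * (C * (u₂ - u₁) * (u₁ - T + (u₂ - u₁)) ^ (H - 1 / 2 - 1 / 2)) ^ 2 := by gcongr
    _ = (η * C * (u₂ - u₁) * (u₂ - T) ^ (H - 1)) ^ 2 := by ring_nf
end

section
/- With K(u,s) = η(u-s)^{H-1/2}, H ∈ (0,1), there is a constant c_Δ > 0 such that for all T ≤ u₁ < u₂ ≤ T + Δ, |∫_0^T (K(u₁,s)² - K(u₂,s)²) ds| ≤ c_Δ (u₂ - u₁)(u₂ - T)^{H-1}. -/
open Real MeasureTheory

/-!
Since `K(u,s)² = η² (u-s)^(2H-1)`, the integral equals `η²/(2H) (B - A)` with the increments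
`A = u₂^(2H) - u₁^(2H)` and `B = (u₂-T)^(2H) - (u₁-T)^(2H)`, both nonnegative, so `|B - A| ≤ max A B`.
The tangent-line bound for the concave `x ↦ x^H` gives `b^H - a^H ≤ b^(H-1) (b - a)`, hence
`b^(2H) - a^(2H) ≤ 2 b^H b^(H-1) (b - a)`; in both increments `u₂ - T ≤ b ≤ T + Δ`, so each is at
most `2 (T+Δ)^H (u₂-T)^(H-1) (u₂-u₁)`.
-/

lemma rpow_sub_rpow_le_rpow_sub_one_mul {p a b : ℝ} (hp0 : 0 < p) (hp1 : p ≤ 1)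
    (ha : 0 ≤ a) (hab : a ≤ b) :
    b ^ p - a ^ p ≤ b ^ (p - 1) * (b - a) := by
  have rpow_eq (x : ℝ) (hx : 0 ≤ x) : x ^ p = x ^ (p - 1) * x := by
    simpa using rpow_add' hx (y := p - 1) (z := 1) (by simpa using hp0.ne')
  have ha_le : b ^ (p - 1) * a ≤ a ^ p := by
    rcases ha.eq_or_lt with rfl | ha
    · simp [zero_rpow hp0.ne']
    · rw [rpow_eq a ha.le]
      exact mul_le_mul_of_nonneg_right (rpow_le_rpow_of_nonpos ha hab (by linarith)) ha.le
  rw [rpow_eq b (ha.trans hab)]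
  linarith

lemma rpow_two_mul_sub_rpow_two_mul_le {H a b d R : ℝ} (hH0 : 0 < H) (hH1 : H ≤ 1)
    (ha : 0 ≤ a) (hab : a ≤ b) (hbR : b ≤ R) (hd : 0 < d) (hdb : d ≤ b) :
    b ^ (2 * H) - a ^ (2 * H) ≤ 2 * R ^ H * d ^ (H - 1) * (b - a) := by
  have hb : 0 ≤ b := ha.trans hab
  have rpow_two_mul (x : ℝ) (hx : 0 ≤ x) : x ^ (2 * H) = (x ^ H) ^ 2 := by
    rw [mul_comm, rpow_mul hx, rpow_two]
  have h_sub : b ^ H - a ^ H ≤ d ^ (H - 1) * (b - a) :=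
    (rpow_sub_rpow_le_rpow_sub_one_mul hH0 hH1 ha hab).trans <|
      mul_le_mul_of_nonneg_right (rpow_le_rpow_of_nonpos hd hdb (by linarith)) (by linarith)
  have h_add : b ^ H + a ^ H ≤ 2 * R ^ H := by
    have hbR' := rpow_le_rpow hb hbR hH0.le
    have haR' := rpow_le_rpow ha (hab.trans hbR) hH0.le
    linarith
  calc b ^ (2 * H) - a ^ (2 * H) = (b ^ H - a ^ H) * (b ^ H + a ^ H) := by
        rw [rpow_two_mul b hb, rpow_two_mul a ha]; ring
    _ ≤ d ^ (H - 1) * (b - a) * (2 * R ^ H) :=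
        mul_le_mul h_sub h_add (by positivity) (by positivity)
    _ = 2 * R ^ H * d ^ (H - 1) * (b - a) := by ring

lemma abs_rpow_increments_sub_le {H T u₁ u₂ R : ℝ} (hH0 : 0 < H) (hH1 : H ≤ 1)
    (hT : 0 ≤ T) (h₁ : T ≤ u₁) (h₁₂ : u₁ < u₂) (h₂ : u₂ ≤ R) :
    |((u₂ - T) ^ (2 * H) - (u₁ - T) ^ (2 * H)) - (u₂ ^ (2 * H) - u₁ ^ (2 * H))|
      ≤ 2 * R ^ H * (u₂ - T) ^ (H - 1) * (u₂ - u₁) := by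
  have h_inc {a b : ℝ} (ha : 0 ≤ a) (hab : a ≤ b) : 0 ≤ b ^ (2 * H) - a ^ (2 * H) :=
    sub_nonneg.mpr (rpow_le_rpow ha hab (by linarith))
  have h_shifted := rpow_two_mul_sub_rpow_two_mul_le (a := u₁ - T) (b := u₂ - T) (R := R)
    hH0 hH1 (by linarith) (by linarith) (by linarith) (by linarith) le_rfl
  rw [sub_sub_sub_cancel_right] at h_shifted
  exact abs_sub_le_of_nonneg_of_le (h_inc (by linarith) (by linarith)) h_shifted
    (h_inc (by linarith) h₁₂.le)
    (rpow_two_mul_sub_rpow_two_mul_le hH0 hH1 (by linarith) h₁₂.le h₂ (by linarith) (by linarith))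

section FractionalKernel

variable (η : ℝ) {H T u : ℝ}

lemma sq_fractional_kernel_eqOn :
    Set.EqOn (fun s => (η * (u - s) ^ (H - 1/2)) ^ 2) (fun s => η ^ 2 * (u - s) ^ (2 * H - 1))
      (Set.Iic u) := by
  intro s hs
  have hus : 0 ≤ u - s := sub_nonneg.mpr hs
  dsimp only
  rw [mul_pow, ← rpow_natCast ((u - s) ^ _) 2, ← rpow_mul hus]
  ring_nf

variable (hH : 0 < H) (hT : 0 ≤ T) (hTu : T ≤ u)
include hT hTu

omit η in
lemma uIcc_subset_Iic : Set.uIcc 0 T ⊆ Set.Iic u := by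
  rw [Set.uIcc_of_le hT]
  exact Set.Icc_subset_Iic_self.trans (Set.Iic_subset_Iic.mpr hTu)

include hH

lemma intervalIntegrable_sq_fractional_kernel :
    IntervalIntegrable (fun s => (η * (u - s) ^ (H - 1/2)) ^ 2) volume 0 T := by
  have h_rpow : IntervalIntegrable (fun x => x ^ (2 * H - 1)) volume (u - T) (u - 0) :=
    intervalIntegral.intervalIntegrable_rpow' (by linarith)
  have h_comp := (h_rpow.comp_sub_left u).symm.const_mul (η ^ 2)
  simp only [sub_sub_cancel] at h_comp
  exact h_comp.congr ((sq_fractional_kernel_eqOn η).symm.mono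
    (Set.uIoc_subset_uIcc.trans (uIcc_subset_Iic hT hTu)))

lemma integral_sq_fractional_kernel :
    ∫ s in (0 : ℝ)..T, (η * (u - s) ^ (H - 1/2)) ^ 2
      = η ^ 2 / (2 * H) * (u ^ (2 * H) - (u - T) ^ (2 * H)) := by
  rw [intervalIntegral.integral_congr
      ((sq_fractional_kernel_eqOn η).mono (uIcc_subset_Iic hT hTu)),
    intervalIntegral.integral_const_mul, intervalIntegral.integral_comp_sub_left
      (fun x => x ^ (2 * H - 1)), integral_rpow (Or.inl (by linarith)), sub_add_cancel, sub_zero, div_mul_eq_mul_div, mul_div_assoc]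

end FractionalKernel

/-- Estimate for the difference of squared fractional kernels: there is `c_Δ > 0`
such that for all `T ≤ u₁ < u₂ ≤ T + Δ`,
`|∫_0^T (K(u₁,s)² - K(u₂,s)²) ds| ≤ c_Δ (u₂-u₁)(u₂-T)^(H-1)`. -/
theorem kernel_sq_diff_estimate (H η T Δ : ℝ) (hH : H ∈ Set.Ioo (0 : ℝ) 1)
    (hη : 0 < η) (hT : 0 < T) (hΔ : 0 < Δ) :
    ∃ c > 0, ∀ u₁ u₂ : ℝ, T ≤ u₁ → u₁ < u₂ → u₂ ≤ T + Δ →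
      |∫ s in (0 : ℝ)..T,
          ((η * (u₁ - s) ^ (H - 1/2)) ^ 2 - (η * (u₂ - s) ^ (H - 1/2)) ^ 2)|
        ≤ c * (u₂ - u₁) * (u₂ - T) ^ (H - 1) := by
  obtain ⟨hH0, hH1⟩ := hH
  refine ⟨η ^ 2 / (2 * H) * (2 * (T + Δ) ^ H), by positivity, fun u₁ u₂ h₁ h₁₂ h₂ => ?_⟩
  have hu₂ : T ≤ u₂ := h₁.trans h₁₂.le
  rw [intervalIntegral.integral_sub (intervalIntegrable_sq_fractional_kernel η hH0 hT.le h₁)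
      (intervalIntegrable_sq_fractional_kernel η hH0 hT.le hu₂),
    integral_sq_fractional_kernel η hH0 hT.le h₁, integral_sq_fractional_kernel η hH0 hT.le hu₂]
  calc _ = η ^ 2 / (2 * H) *
        |((u₂ - T) ^ (2 * H) - (u₁ - T) ^ (2 * H)) - (u₂ ^ (2 * H) - u₁ ^ (2 * H))| := by
        rw [← mul_sub, abs_mul, abs_of_pos (by positivity)]
        congr 2
        ring
    _ ≤ η ^ 2 / (2 * H) * (2 * (T + Δ) ^ H * (u₂ - T) ^ (H - 1) * (u₂ - u₁)) := by
        gcongr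
        exact abs_rpow_increments_sub_le hH0 hH1.le hT.le h₁ h₁₂ h₂
    _ = _ := by ring
end

section
/- With K(u,s) = η(u-s)^{H-1/2}, H ∈ (0,1), there is a constant c > 0 such that for all T ≤ u₁ ≤ u₂ < u₃, (∫_0^T (K(u₂,s) - ((u₃-u₂)/(u₃-u₁))K(u₁,s) - ((u₂-u₁)/(u₃-u₁))K(u₃,s))² ds)^{1/2} ≤ c(u₃-u₁)²(u₃-T)^{H-2}. -/
/-!
For fixed `s`, two mean value theorems bound the linear interpolation error of
`u ↦ η (u - s)^(H - 1/2)` at `u₁ ≤ u₂ < u₃` by `|η| (u₃ - u₁)² (u₁ - s)^(H - 5/2)`, the size of the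
second derivative on `[u₁, u₃]`. Squared and integrated over `s ≤ 2u₁ - u₃` this gives
`η² (u₃ - u₁)⁴ (u₃ - T)^(2H - 4)` up to a constant, because `u₃ - s ≤ 2 (u₁ - s)` there.
If `T > 2u₁ - u₃`, the remaining window `[2u₁ - u₃, T]` has `u₃ - T < 2 (u₃ - u₁)`, and there the
error is bounded crudely by the three kernel values, whose squares `(u - s)^(2H - 1)` integrate to
`O((u₃ - u₁)^(2H))`, which is again `O((u₃ - u₁)⁴ (u₃ - T)^(2H - 4))`.
-/

open Real MeasureTheory Set intervalIntegral

noncomputable def linearInterpolationError (f : ℝ → ℝ) (u₁ u₂ u₃ : ℝ) : ℝ :=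
  f u₂ - (u₃ - u₂) / (u₃ - u₁) * f u₁ - (u₂ - u₁) / (u₃ - u₁) * f u₃

theorem linearInterpolationError_eq_mul_slope_sub_slope {f : ℝ → ℝ} {u₁ u₂ u₃ : ℝ}
    (h12 : u₁ < u₂) (h23 : u₂ < u₃) :
    linearInterpolationError f u₁ u₂ u₃
      = (u₃ - u₂) * (u₂ - u₁) / (u₃ - u₁) * (slope f u₁ u₂ - slope f u₂ u₃) := by
  have h12' : u₂ - u₁ ≠ 0 := (sub_pos.2 h12).ne'
  have h23' : u₃ - u₂ ≠ 0 := (sub_pos.2 h23).ne'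
  have h13' : u₃ - u₁ ≠ 0 := (sub_pos.2 (h12.trans h23)).ne'
  simp only [linearInterpolationError, slope_def_field]
  field_simp
  ring

theorem abs_linearInterpolationError_le {f f' f'' : ℝ → ℝ} {u₁ u₂ u₃ M : ℝ}
    (h12 : u₁ ≤ u₂) (h23 : u₂ < u₃)
    (hf : ∀ t ∈ Icc u₁ u₃, HasDerivAt f (f' t) t)
    (hf' : ∀ t ∈ Icc u₁ u₃, HasDerivAt f' (f'' t) t)
    (hM : ∀ t ∈ Icc u₁ u₃, |f'' t| ≤ M) :
    |linearInterpolationError f u₁ u₂ u₃| ≤ M * (u₃ - u₁) ^ 2 := by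
  have hM0 : 0 ≤ M := (abs_nonneg _).trans (hM u₁ ⟨le_rfl, h12.trans h23.le⟩)
  rcases h12.eq_or_lt with rfl | h12
  · simp [linearInterpolationError, div_self (sub_pos.2 h23).ne']
    positivity
  have mvt : ∀ {g g' : ℝ → ℝ} {a b : ℝ}, u₁ ≤ a → a < b → b ≤ u₃ →
      (∀ t ∈ Icc u₁ u₃, HasDerivAt g (g' t) t) → ∃ ξ ∈ Ioo a b, g' ξ = slope g a b :=
    fun ha hab hb hg => by
      obtain ⟨ξ, hξ, h⟩ := exists_hasDerivAt_eq_slope _ _ hab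
        (fun t ht => (hg t ⟨ha.trans ht.1, ht.2.trans hb⟩).continuousAt.continuousWithinAt)
        (fun t ht => hg t ⟨ha.trans ht.1.le, ht.2.le.trans hb⟩)
      exact ⟨ξ, hξ, h.trans (slope_def_field _ _ _).symm⟩
  obtain ⟨ξ₁, ⟨hξ₁, hξ₁'⟩, hs₁⟩ := mvt le_rfl h12 h23.le hf
  obtain ⟨ξ₂, ⟨hξ₂, hξ₂'⟩, hs₂⟩ := mvt h12.le h23 le_rfl hf
  obtain ⟨ζ, ⟨hζ, hζ'⟩, hs₃⟩ := mvt hξ₁.le (hξ₁'.trans hξ₂) hξ₂'.le hf'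
  have hslope : slope f u₁ u₂ - slope f u₂ u₃ = -(f'' ζ * (ξ₂ - ξ₁)) := by
    rw [← hs₁, ← hs₂, hs₃, slope_def_field, div_mul_cancel₀ _ (by linarith)]
    ring
  have hweight : 0 ≤ (u₃ - u₂) * (u₂ - u₁) / (u₃ - u₁) :=
    div_nonneg (mul_nonneg (by linarith) (by linarith)) (by linarith)
  have hweight_le : (u₃ - u₂) * (u₂ - u₁) / (u₃ - u₁) ≤ u₃ - u₁ := by
    rw [div_le_iff₀ (by linarith)]; nlinarith
  rw [linearInterpolationError_eq_mul_slope_sub_slope h12 h23, hslope, abs_mul, abs_neg,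
    abs_mul, abs_of_nonneg hweight, abs_of_pos (by linarith : 0 < ξ₂ - ξ₁)]
  calc _ ≤ (u₃ - u₁) * (M * (u₃ - u₁)) :=
        mul_le_mul hweight_le (mul_le_mul (hM ζ ⟨by linarith, by linarith⟩) (by linarith)
          (by linarith) hM0) (mul_nonneg (abs_nonneg _) (by linarith)) (by linarith)
    _ = M * (u₃ - u₁) ^ 2 := by ring

theorem sq_linearInterpolationError_le (f : ℝ → ℝ) {u₁ u₂ u₃ : ℝ}
    (h12 : u₁ ≤ u₂) (h23 : u₂ < u₃) :
    linearInterpolationError f u₁ u₂ u₃ ^ 2 ≤ 3 * (f u₁ ^ 2 + f u₂ ^ 2 + f u₃ ^ 2) := by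
  have h13 : 0 < u₃ - u₁ := by linarith
  have hw₁ : (u₃ - u₂) / (u₃ - u₁) ≤ 1 := (div_le_one h13).2 (by linarith)
  have hw₃ : (u₂ - u₁) / (u₃ - u₁) ≤ 1 := (div_le_one h13).2 (by linarith)
  have hw₁' : 0 ≤ (u₃ - u₂) / (u₃ - u₁) := div_nonneg (by linarith) h13.le
  have hw₃' : 0 ≤ (u₂ - u₁) / (u₃ - u₁) := div_nonneg (by linarith) h13.le
  unfold linearInterpolationError
  generalize (u₃ - u₂) / (u₃ - u₁) = a at *
  generalize (u₂ - u₁) / (u₃ - u₁) = b at *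
  nlinarith [sq_nonneg (f u₂ + a * f u₁), sq_nonneg (f u₂ + b * f u₃),
    sq_nonneg (a * f u₁ - b * f u₃),
    mul_nonneg (sub_nonneg.2 (mul_le_one₀ hw₁ hw₁' hw₁)) (sq_nonneg (f u₁)),
    mul_nonneg (sub_nonneg.2 (mul_le_one₀ hw₃ hw₃' hw₃)) (sq_nonneg (f u₃))]

theorem intervalIntegrable_sub_rpow_of_neg_one_lt {q : ℝ} (hq : -1 < q) (u a b : ℝ) :
    IntervalIntegrable (fun s => (u - s) ^ q) volume a b := by
  simpa using (intervalIntegrable_rpow' hq (a := u - a) (b := u - b)).comp_sub_left u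

theorem intervalIntegrable_sub_rpow_of_lt {u a b : ℝ} (q : ℝ) (hab : a ≤ b) (hbu : b < u) :
    IntervalIntegrable (fun s => (u - s) ^ q) volume a b := by
  refine (continuousOn_const.sub continuousOn_id |>.rpow_const ?_).intervalIntegrable
  rw [uIcc_of_le hab]
  exact fun s hs => Or.inl (sub_pos.2 (hs.2.trans_lt hbu)).ne'

theorem integral_sub_rpow {u a b q : ℝ} (hab : a ≤ b) (h : -1 < q ∨ q ≠ -1 ∧ b < u) :
    ∫ s in a..b, (u - s) ^ q = ((u - a) ^ (q + 1) - (u - b) ^ (q + 1)) / (q + 1) := by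
  rw [integral_comp_sub_left (fun x => x ^ q) u, integral_rpow]
  refine h.imp_right fun h => ⟨h.1, ?_⟩
  rw [uIcc_of_le (by linarith)]
  exact fun h0 => (h0.1.trans_lt' (sub_pos.2 h.2)).false

theorem integral_sub_rpow_le_of_lt_neg_one {u a b q : ℝ} (hab : a ≤ b) (hbu : b < u)
    (hq : q < -1) :
    ∫ s in a..b, (u - s) ^ q ≤ (u - b) ^ (q + 1) / -(q + 1) := by
  rw [integral_sub_rpow hab (Or.inr ⟨hq.ne, hbu⟩), ← neg_div_neg_eq, neg_sub]
  gcongr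
  · linarith
  · exact sub_le_self _ (rpow_nonneg (by linarith) _)

theorem integral_sub_rpow_le_of_neg_one_lt {u a b q : ℝ} (hab : a ≤ b) (hbu : b ≤ u)
    (hq : -1 < q) :
    ∫ s in a..b, (u - s) ^ q ≤ (u - a) ^ (q + 1) / (q + 1) := by
  rw [integral_sub_rpow hab (Or.inl hq)]
  gcongr
  · linarith
  · exact sub_le_self _ (rpow_nonneg (sub_nonneg.2 hbu) _)

theorem rpow_le_sixteen_mul_rpow {x y p : ℝ} (hy : 0 < y) (hyx : y ≤ 2 * x)
    (hp : p ∈ Icc (-4) 0) : x ^ p ≤ 16 * y ^ p := by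
  have hx : 0 < x := by linarith
  calc x ^ p = 2 ^ (-p) * (2 * x) ^ p := by
        rw [mul_rpow zero_le_two hx.le, ← mul_assoc, ← rpow_add zero_lt_two, neg_add_cancel,
          rpow_zero, one_mul]
    _ ≤ 2 ^ (4 : ℝ) * y ^ p := by
        gcongr ?_ * ?_
        · exact rpow_le_rpow_of_exponent_le one_le_two (by linarith [hp.1])
        · exact rpow_le_rpow_of_nonpos hy hyx hp.2
    _ = 16 * y ^ p := by norm_num

theorem hasDerivAt_mul_sub_rpow (c p : ℝ) {s t : ℝ} (hst : s < t) :
    HasDerivAt (fun u => c * (u - s) ^ p) (c * p * (t - s) ^ (p - 1)) t := by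
  simpa [mul_assoc] using
    (((hasDerivAt_id t).sub_const s).rpow_const (p := p) (Or.inl (sub_pos.2 hst).ne')).const_mul c

noncomputable def fracKernel (η H u s : ℝ) : ℝ := η * (u - s) ^ (H - 1/2)

section FracKernel

variable {η H u₁ u₂ u₃ s : ℝ}

theorem fracKernel_sq {u : ℝ} (hs : s ≤ u) :
    fracKernel η H u s ^ 2 = η ^ 2 * (u - s) ^ (2 * H - 1) := by
  rw [fracKernel, mul_pow, ← rpow_mul_natCast (sub_nonneg.2 hs)]
  congr 2
  push_cast
  ring

theorem sq_linearInterpolationError_fracKernel_le_of_lt (hH : H ∈ Icc 0 1) (hs : s < u₁)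
    (h12 : u₁ ≤ u₂) (h23 : u₂ < u₃) :
    linearInterpolationError (fracKernel η H · s) u₁ u₂ u₃ ^ 2
      ≤ η ^ 2 * (u₃ - u₁) ^ 4 * (u₁ - s) ^ (2 * H - 5) := by
  have hcoef : |(H - 1/2) * (H - 1/2 - 1)| ≤ 1 :=
    abs_le.2 ⟨by nlinarith [sq_nonneg (H - 1)], by nlinarith [hH.1, hH.2]⟩
  have hlt : ∀ t ∈ Icc u₁ u₃, s < t := fun t ht => hs.trans_le ht.1
  have habs := abs_linearInterpolationError_le (f := (fracKernel η H · s))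
    (M := |η| * (u₁ - s) ^ (H - 1/2 - 1 - 1)) h12 h23
    (fun t ht => hasDerivAt_mul_sub_rpow η (H - 1/2) (hlt t ht))
    (fun t ht => hasDerivAt_mul_sub_rpow (η * (H - 1/2)) (H - 1/2 - 1) (hlt t ht))
    (fun t ht => by
      rw [mul_assoc η, abs_mul, abs_mul,
        abs_of_nonneg (rpow_nonneg (sub_pos.2 (hlt t ht)).le _), mul_assoc]
      refine mul_le_mul_of_nonneg_left ?_ (abs_nonneg η)
      calc _ ≤ 1 * (t - s) ^ (H - 1/2 - 1 - 1) :=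
            mul_le_mul_of_nonneg_right hcoef (rpow_nonneg (sub_pos.2 (hlt t ht)).le _)
        _ ≤ (u₁ - s) ^ (H - 1/2 - 1 - 1) := by
            rw [one_mul]
            exact rpow_le_rpow_of_nonpos (sub_pos.2 hs) (by linarith [ht.1]) (by linarith [hH.2]))
  calc _ = |linearInterpolationError (fracKernel η H · s) u₁ u₂ u₃| ^ 2 := (sq_abs _).symm
    _ ≤ (|η| * (u₁ - s) ^ (H - 1/2 - 1 - 1) * (u₃ - u₁) ^ 2) ^ 2 := by gcongr
    _ = η ^ 2 * (u₃ - u₁) ^ 4 * (u₁ - s) ^ (2 * H - 5) := by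
        rw [mul_pow, mul_pow, sq_abs, ← rpow_mul_natCast (sub_pos.2 hs).le, ← pow_mul]
        ring_nf

theorem sq_linearInterpolationError_fracKernel_le_sum (hs : s ≤ u₁) (h12 : u₁ ≤ u₂)
    (h23 : u₂ < u₃) :
    linearInterpolationError (fracKernel η H · s) u₁ u₂ u₃ ^ 2
      ≤ 3 * η ^ 2 * ((u₁ - s) ^ (2 * H - 1) + (u₂ - s) ^ (2 * H - 1) + (u₃ - s) ^ (2 * H - 1)) := by
  have := sq_linearInterpolationError_le (fracKernel η H · s) h12 h23
  rw [fracKernel_sq hs, fracKernel_sq (hs.trans h12), fracKernel_sq (by linarith)] at this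
  linarith

theorem intervalIntegrable_sq_linearInterpolationError_fracKernel {a b : ℝ} (hH : 0 < H)
    (hab : a ≤ b) (hb : b ≤ u₁) (h12 : u₁ ≤ u₂) (h23 : u₂ < u₃) :
    IntervalIntegrable (fun s => linearInterpolationError (fracKernel η H · s) u₁ u₂ u₃ ^ 2)
      volume a b := by
  have hq : (-1 : ℝ) < 2 * H - 1 := by linarith
  refine IntervalIntegrable.mono_fun'
    ((((intervalIntegrable_sub_rpow_of_neg_one_lt hq u₁ a b).add
      (intervalIntegrable_sub_rpow_of_neg_one_lt hq u₂ a b)).add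
      (intervalIntegrable_sub_rpow_of_neg_one_lt hq u₃ a b)).const_mul (3 * η ^ 2))
    (by unfold linearInterpolationError fracKernel; fun_prop) ?_
  rw [uIoc_of_le hab]
  refine (ae_restrict_mem measurableSet_Ioc).mono fun s hs => ?_
  dsimp only
  rw [Real.norm_of_nonneg (sq_nonneg _)]
  exact sq_linearInterpolationError_fracKernel_le_sum (hs.2.trans hb) h12 h23

theorem integral_sq_linearInterpolationError_fracKernel_le_of_le_two_mul_sub {a b : ℝ}
    (hH : H ∈ Ioo 0 1) (hab : a ≤ b) (hb : b ≤ 2 * u₁ - u₃) (h12 : u₁ ≤ u₂) (h23 : u₂ < u₃) :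
    ∫ s in a..b, linearInterpolationError (fracKernel η H · s) u₁ u₂ u₃ ^ 2
      ≤ 8 * η ^ 2 * (u₃ - u₁) ^ 4 * (u₃ - b) ^ (2 * H - 4) := by
  have hbu : b < u₁ := by linarith
  calc _ ≤ ∫ s in a..b, η ^ 2 * (u₃ - u₁) ^ 4 * (u₁ - s) ^ (2 * H - 5) :=
        integral_mono_on hab
          (intervalIntegrable_sq_linearInterpolationError_fracKernel hH.1 hab hbu.le h12 h23)
          ((intervalIntegrable_sub_rpow_of_lt _ hab hbu).const_mul _)
          fun s hs => sq_linearInterpolationError_fracKernel_le_of_lt (Ioo_subset_Icc_self hH)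
            (hs.2.trans_lt hbu) h12 h23
    _ = η ^ 2 * (u₃ - u₁) ^ 4 * ∫ s in a..b, (u₁ - s) ^ (2 * H - 5) := integral_const_mul _ _
    _ ≤ η ^ 2 * (u₃ - u₁) ^ 4 * ((u₁ - b) ^ (2 * H - 4) / 2) := by
        gcongr
        calc _ ≤ (u₁ - b) ^ (2 * H - 5 + 1) / -(2 * H - 5 + 1) :=
              integral_sub_rpow_le_of_lt_neg_one hab hbu (by linarith [hH.2])
          _ ≤ (u₁ - b) ^ (2 * H - 4) / 2 := by
              rw [show 2 * H - 5 + 1 = 2 * H - 4 by ring]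
              exact div_le_div_of_nonneg_left (rpow_nonneg (by linarith) _) two_pos
                (by linarith [hH.2])
    _ ≤ η ^ 2 * (u₃ - u₁) ^ 4 * (16 * (u₃ - b) ^ (2 * H - 4) / 2) := by
        gcongr
        exact rpow_le_sixteen_mul_rpow (by linarith) (by linarith)
          ⟨by linarith [hH.1], by linarith [hH.2]⟩
    _ = 8 * η ^ 2 * (u₃ - u₁) ^ 4 * (u₃ - b) ^ (2 * H - 4) := by ring

theorem integral_sq_linearInterpolationError_fracKernel_le {b c : ℝ} (hH : 0 < H)
    (hbc : b ≤ c) (hc : c ≤ u₁) (h12 : u₁ ≤ u₂) (h23 : u₂ < u₃) :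
    ∫ s in b..c, linearInterpolationError (fracKernel η H · s) u₁ u₂ u₃ ^ 2
      ≤ 9 * η ^ 2 * (u₃ - b) ^ (2 * H) / (2 * H) := by
  have hq : (-1 : ℝ) < 2 * H - 1 := by linarith
  have hint := intervalIntegrable_sub_rpow_of_neg_one_lt hq (a := b) (b := c)
  have hterm : ∀ u, c ≤ u → u ≤ u₃ →
      ∫ s in b..c, (u - s) ^ (2 * H - 1) ≤ (u₃ - b) ^ (2 * H) / (2 * H) := fun u hu hu₃ =>
    calc _ ≤ (u - b) ^ (2 * H - 1 + 1) / (2 * H - 1 + 1) :=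
          integral_sub_rpow_le_of_neg_one_lt hbc hu hq
      _ ≤ (u₃ - b) ^ (2 * H) / (2 * H) := by
          rw [sub_add_cancel]
          gcongr
          linarith
  calc _ ≤ ∫ s in b..c, 3 * η ^ 2 *
          ((u₁ - s) ^ (2 * H - 1) + (u₂ - s) ^ (2 * H - 1) + (u₃ - s) ^ (2 * H - 1)) :=
        integral_mono_on hbc
          (intervalIntegrable_sq_linearInterpolationError_fracKernel hH hbc hc h12 h23)
          (((hint u₁).add (hint u₂)).add (hint u₃) |>.const_mul _)
          fun s hs => sq_linearInterpolationError_fracKernel_le_sum (hs.2.trans hc) h12 h23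
    _ = 3 * η ^ 2 * ((∫ s in b..c, (u₁ - s) ^ (2 * H - 1))
          + (∫ s in b..c, (u₂ - s) ^ (2 * H - 1)) + ∫ s in b..c, (u₃ - s) ^ (2 * H - 1)) := by
        rw [intervalIntegral.integral_const_mul,
          integral_add ((hint u₁).add (hint u₂)) (hint u₃), integral_add (hint u₁) (hint u₂)]
    _ ≤ 3 * η ^ 2 * (3 * ((u₃ - b) ^ (2 * H) / (2 * H))) := by
        have := hterm u₁ hc (by linarith)
        have := hterm u₂ (by linarith) (by linarith)
        have := hterm u₃ (by linarith) le_rfl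
        gcongr
        linarith
    _ = 9 * η ^ 2 * (u₃ - b) ^ (2 * H) / (2 * H) := by ring

theorem integral_sq_linearInterpolationError_fracKernel_le_of_two_mul_sub_lt {T : ℝ}
    (hH : H ∈ Ioo 0 1) (hT₀ : 0 ≤ T) (hT : 2 * u₁ - u₃ < T) (hTu : T ≤ u₁) (h12 : u₁ ≤ u₂)
    (h23 : u₂ < u₃) :
    ∫ s in (0 : ℝ)..T, linearInterpolationError (fracKernel η H · s) u₁ u₂ u₃ ^ 2
      ≤ (8 + 72 / H) * η ^ 2 * (u₃ - u₁) ^ 4 * (2 * (u₃ - u₁)) ^ (2 * H - 4) := by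
  set b := 2 * u₁ - u₃
  set a := min 0 b
  have hu₃b : u₃ - b = 2 * (u₃ - u₁) := by ring
  have hδ : 0 < u₃ - u₁ := by linarith
  have hint {x y : ℝ} (hxy : x ≤ y) (hy : y ≤ u₁) :=
    intervalIntegrable_sq_linearInterpolationError_fracKernel (η := η) hH.1 hxy hy h12 h23
  calc _ ≤ ∫ s in a..T, linearInterpolationError (fracKernel η H · s) u₁ u₂ u₃ ^ 2 :=
        integral_mono_interval (min_le_left 0 b) hT₀ le_rfl
          (Filter.Eventually.of_forall fun s => sq_nonneg _)
          (hint (min_le_right 0 b |>.trans hT.le) hTu)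
    _ = (∫ s in a..b, linearInterpolationError (fracKernel η H · s) u₁ u₂ u₃ ^ 2)
          + ∫ s in b..T, linearInterpolationError (fracKernel η H · s) u₁ u₂ u₃ ^ 2 :=
        (integral_add_adjacent_intervals (hint (min_le_right 0 b) (hT.le.trans hTu))
          (hint hT.le hTu)).symm
    _ ≤ 8 * η ^ 2 * (u₃ - u₁) ^ 4 * (u₃ - b) ^ (2 * H - 4)
          + 9 * η ^ 2 * (u₃ - b) ^ (2 * H) / (2 * H) :=
        add_le_add
          (integral_sq_linearInterpolationError_fracKernel_le_of_le_two_mul_sub hH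
            (min_le_right 0 b) le_rfl h12 h23)
          (integral_sq_linearInterpolationError_fracKernel_le hH.1 hT.le hTu h12 h23)
    _ = (8 + 72 / H) * η ^ 2 * (u₃ - u₁) ^ 4 * (2 * (u₃ - u₁)) ^ (2 * H - 4) := by
        have hsplit : (2 * (u₃ - u₁)) ^ (2 * H)
            = (2 * (u₃ - u₁)) ^ (2 * H - 4) * (2 * (u₃ - u₁)) ^ 4 := by
          rw [← rpow_add_natCast (by positivity)]
          norm_num
        rw [hu₃b, hsplit]
        field_simp
        ring

end FracKernel

theorem rpow_one_half_le_sqrt_mul {I C A : ℝ} (hC : 0 ≤ C) (hA : 0 ≤ A) (h : I ≤ C * A ^ 2) :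
    I ^ ((1 : ℝ) / 2) ≤ √C * A := by
  rw [← sqrt_eq_rpow, ← sqrt_sq hA, ← sqrt_mul hC]
  exact sqrt_le_sqrt h

/-- Second-order (linear interpolation) L² error estimate for the fractional kernel:
there is `c > 0` such that for all `T ≤ u₁ ≤ u₂ < u₃`,
`‖K(u₂,·) - ((u₃-u₂)/(u₃-u₁)) K(u₁,·) - ((u₂-u₁)/(u₃-u₁)) K(u₃,·)‖_{L²(0,T)}
  ≤ c (u₃-u₁)² (u₃-T)^(H-2)`. -/
theorem kernel_interpolation_estimate (H η T : ℝ) (hH : H ∈ Set.Ioo (0 : ℝ) 1)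
    (hη : 0 < η) (hT : 0 < T) :
    ∃ c > 0, ∀ u₁ u₂ u₃ : ℝ, T ≤ u₁ → u₁ ≤ u₂ → u₂ < u₃ →
      (∫ s in (0 : ℝ)..T,
          (η * (u₂ - s) ^ (H - 1/2)
            - ((u₃ - u₂)/(u₃ - u₁)) * (η * (u₁ - s) ^ (H - 1/2))
            - ((u₂ - u₁)/(u₃ - u₁)) * (η * (u₃ - s) ^ (H - 1/2))) ^ 2) ^ ((1 : ℝ)/2)
        ≤ c * (u₃ - u₁) ^ 2 * (u₃ - T) ^ (H - 2) := by
  have hC : 0 < 8 + 72 / H := by have := hH.1; positivity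
  refine ⟨η * √(8 + 72 / H), by positivity, fun u₁ u₂ u₃ hTu h12 h23 => ?_⟩
  have hX : 0 < u₃ - T := by linarith
  have hsq : (η * (u₃ - u₁) ^ 2 * (u₃ - T) ^ (H - 2)) ^ 2
      = η ^ 2 * (u₃ - u₁) ^ 4 * (u₃ - T) ^ (2 * H - 4) := by
    rw [mul_pow, mul_pow, ← pow_mul, ← rpow_mul_natCast hX.le]
    ring_nf
  show (∫ s in (0 : ℝ)..T, linearInterpolationError (fracKernel η H · s) u₁ u₂ u₃ ^ 2)
      ^ ((1 : ℝ) / 2) ≤ _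
  rw [show η * √(8 + 72 / H) * (u₃ - u₁) ^ 2 * (u₃ - T) ^ (H - 2)
      = √(8 + 72 / H) * (η * (u₃ - u₁) ^ 2 * (u₃ - T) ^ (H - 2)) by ring]
  refine rpow_one_half_le_sqrt_mul hC.le (by positivity) ?_
  rw [hsq, ← mul_assoc, ← mul_assoc]
  rcases le_or_gt T (2 * u₁ - u₃) with hfar | hnear
  · refine (integral_sq_linearInterpolationError_fracKernel_le_of_le_two_mul_sub
      hH hT.le hfar h12 h23).trans ?_
    gcongr
    linarith [div_pos (by norm_num : (0 : ℝ) < 72) hH.1]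
  · refine (integral_sq_linearInterpolationError_fracKernel_le_of_two_mul_sub_lt
      hH hT.le hnear hTu h12 h23).trans ?_
    exact mul_le_mul_of_nonneg_left
      (rpow_le_rpow_of_nonpos hX (by linarith) (by linarith [hH.2])) (by positivity)
end

section
/- Suppose a family of estimators satisfies: bias |E[P_ℓ - P]| ≤ c₁ 2^{-(1+H)ℓ}, level variance V_ℓ ≤ c₂ 2^{-2(1+H)ℓ}, per-sample cost C_ℓ ≤ c₃ 2^{2ℓ}, for some H ∈ (0,1). Then for every ε > 0 there is a choice of number of levels L and sample sizes M_ℓ ∝ 2^{-(2+H)ℓ} such that the multilevel estimator has mean-squared error ≤ ε² and total computational cost O(ε^{-2}) as ε → 0. -/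
open Real Finset

/-!
With `S = (1 - 2^{-H})⁻¹`, sample sizes `M_ℓ = ⌈M₀ 2^{-(2+H)ℓ}⌉` give
`V_ℓ / M_ℓ ≤ (c₂ / M₀) 2^{-Hℓ}` and `M_ℓ C_ℓ ≤ c₃ M₀ 2^{-Hℓ} + c₃ 4^ℓ`, so the variance is at most
`c₂ S / M₀` and the cost at most `c₃ M₀ S + c₃ 4^{L+1} / 3`, uniformly in `L`. Taking
`M₀ = 2 c₂ S / ε²` makes the variance `ε² / 2`, and taking `4^L` comparable to
`max 1 (2 c₁² / ε²)` makes the squared bias `≤ c₁² / 4^L ≤ ε² / 2`; both cost terms are then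
`O(ε⁻²)`.
-/

section OrderedField

variable {K : Type*} [Field K] [LinearOrder K] [IsStrictOrderedRing K]

lemma geom_sum_le_pow_div_sub_one {q : K} (hq : 1 < q) (n : ℕ) :
    ∑ i ∈ range n, q ^ i ≤ q ^ n / (q - 1) := by
  rw [geom_sum_eq hq.ne']
  exact div_le_div_of_nonneg_right (sub_le_self _ zero_le_one) (sub_pos.2 hq).le

lemma exists_le_pow_le_mul_max [Archimedean K] {b : K} (hb : 1 < b) (y : K) :
    ∃ n : ℕ, y ≤ b ^ n ∧ b ^ n ≤ b * max 1 y := by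
  obtain ⟨n, hle, hlt⟩ := exists_nat_pow_near (le_max_left 1 y) hb
  refine ⟨n + 1, (le_max_right 1 y).trans hlt.le, ?_⟩
  rw [pow_succ']
  exact mul_le_mul_of_nonneg_left hle (by linarith)

variable [FloorSemiring K]

lemma div_natCeil_mul_le {V v w M₀ : K} (hV₀ : 0 ≤ V) (hV : V ≤ v * w) (hM₀ : 0 < M₀)
    (hw : 0 < w) : V / ⌈M₀ * w⌉₊ ≤ v / M₀ :=
  calc V / ⌈M₀ * w⌉₊ ≤ V / (M₀ * w) :=
        div_le_div_of_nonneg_left hV₀ (by positivity) (Nat.le_ceil _)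
    _ ≤ v * w / (M₀ * w) := by gcongr
    _ = v / M₀ := mul_div_mul_right v M₀ hw.ne'

lemma natCeil_mul_le {x C c : K} (hx : 0 ≤ x) (hC₀ : 0 ≤ C) (hC : C ≤ c) :
    ⌈x⌉₊ * C ≤ x * c + c :=
  calc (⌈x⌉₊ : K) * C ≤ (x + 1) * c :=
        mul_le_mul (Nat.ceil_lt_add_one hx).le hC hC₀ (by linarith)
    _ = x * c + c := by ring

end OrderedField

lemma exists_sq_div_four_pow_le {c ε : ℝ} (hε : 0 < ε) :
    ∃ L : ℕ, c ^ 2 / 4 ^ L ≤ ε ^ 2 / 2 ∧ (4 : ℝ) ^ (L + 1) ≤ 16 * (1 + 2 * c ^ 2 * ε⁻¹ ^ 2) := by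
  obtain ⟨L, hle, hge⟩ :=
    exists_le_pow_le_mul_max (by norm_num : (1 : ℝ) < 4) (2 * c ^ 2 * ε⁻¹ ^ 2)
  refine ⟨L, ?_, ?_⟩
  · have hε_sq : ε ^ 2 * ε⁻¹ ^ 2 = 1 := by field_simp
    rw [div_le_iff₀ (by positivity)]
    linear_combination mul_le_mul_of_nonneg_left hle (sq_nonneg ε) / 2 - c ^ 2 * hε_sq
  · have hmax : max 1 (2 * c ^ 2 * ε⁻¹ ^ 2) ≤ 1 + 2 * c ^ 2 * ε⁻¹ ^ 2 :=
      max_le (by linarith [show 0 ≤ 2 * c ^ 2 * ε⁻¹ ^ 2 by positivity]) (by linarith)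
    rw [pow_succ']
    linarith

section Multilevel

variable {H : ℝ}

lemma sum_two_rpow_neg_mul_le (hH : 0 < H) (n : ℕ) :
    ∑ ℓ ∈ range n, (2 : ℝ) ^ (-H * ℓ) ≤ (1 - 2 ^ (-H))⁻¹ := by
  have hr : (2 : ℝ) ^ (-H) < 1 := rpow_lt_one_of_one_lt_of_neg one_lt_two (neg_neg_of_pos hH)
  simp_rw [rpow_mul_natCast zero_le_two]
  simpa [← range_eq_Ico] using
    geom_sum_Ico_le_of_lt_one (m := 0) (n := n) (rpow_nonneg zero_le_two _) hr

lemma sq_le_div_four_pow {c₁ b : ℝ} (hH : 0 ≤ H) {L : ℕ}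
    (hb : |b| ≤ c₁ * 2 ^ (-(1 + H) * (L : ℝ))) : b ^ 2 ≤ c₁ ^ 2 / 4 ^ L := by
  have hc₁ : 0 ≤ c₁ := nonneg_of_mul_nonneg_left ((abs_nonneg b).trans hb) (by positivity)
  have hdecay : (2 : ℝ) ^ (-(1 + H) * (L : ℝ)) ≤ (1 / 2) ^ L := by
    rw [rpow_mul_natCast zero_le_two]
    gcongr
    calc (2 : ℝ) ^ (-(1 + H)) ≤ 2 ^ (-1 : ℝ) := by gcongr <;> [norm_num; linarith]
      _ = 1 / 2 := by norm_num
  calc b ^ 2 = |b| ^ 2 := (sq_abs b).symm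
    _ ≤ (c₁ * (1 / 2) ^ L) ^ 2 := by gcongr; exact hb.trans (by gcongr)
    _ = c₁ ^ 2 / 4 ^ L := by
      rw [one_div_pow, mul_one_div, div_pow, ← pow_mul, mul_comm L, pow_mul]
      norm_num

lemma sum_div_natCeil_le {c₂ M₀ : ℝ} {V : ℕ → ℝ} (hH : 0 < H) (hc₂ : 0 ≤ c₂) (hM₀ : 0 < M₀)
    (hV : ∀ ℓ : ℕ, 0 ≤ V ℓ ∧ V ℓ ≤ c₂ * 2 ^ (-2 * (1 + H) * (ℓ : ℝ))) (n : ℕ) :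
    ∑ ℓ ∈ range n, V ℓ / ⌈M₀ * 2 ^ (-(2 + H) * (ℓ : ℝ))⌉₊ ≤ c₂ * (1 - 2 ^ (-H))⁻¹ / M₀ := by
  have hsplit (ℓ : ℕ) : c₂ * (2 : ℝ) ^ (-2 * (1 + H) * (ℓ : ℝ))
      = c₂ * 2 ^ (-H * ℓ) * 2 ^ (-(2 + H) * (ℓ : ℝ)) := by
    rw [mul_assoc _ ((2 : ℝ) ^ (-H * ℓ)), ← rpow_add two_pos]
    ring_nf
  calc ∑ ℓ ∈ range n, V ℓ / ⌈M₀ * 2 ^ (-(2 + H) * (ℓ : ℝ))⌉₊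
      ≤ ∑ ℓ ∈ range n, c₂ * 2 ^ (-H * ℓ) / M₀ := sum_le_sum fun ℓ _ =>
        div_natCeil_mul_le (hV ℓ).1 ((hV ℓ).2.trans_eq (hsplit ℓ)) hM₀ (by positivity)
    _ = c₂ * (∑ ℓ ∈ range n, (2 : ℝ) ^ (-H * ℓ)) / M₀ := by rw [← sum_div, ← mul_sum]
    _ ≤ c₂ * (1 - 2 ^ (-H))⁻¹ / M₀ := by gcongr; exact sum_two_rpow_neg_mul_le hH n

lemma sum_natCeil_mul_le {c₃ M₀ : ℝ} {C : ℕ → ℝ} (hH : 0 < H) (hc₃ : 0 ≤ c₃) (hM₀ : 0 ≤ M₀)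
    (hC : ∀ ℓ : ℕ, 0 ≤ C ℓ ∧ C ℓ ≤ c₃ * 2 ^ (2 * (ℓ : ℝ))) (n : ℕ) :
    ∑ ℓ ∈ range n, ⌈M₀ * 2 ^ (-(2 + H) * (ℓ : ℝ))⌉₊ * C ℓ
      ≤ c₃ * M₀ * (1 - 2 ^ (-H))⁻¹ + c₃ * (4 ^ n / 3) := by
  have hsplit (ℓ : ℕ) : M₀ * (2 : ℝ) ^ (-(2 + H) * (ℓ : ℝ)) * (c₃ * 2 ^ (2 * (ℓ : ℝ)))
      + c₃ * 2 ^ (2 * (ℓ : ℝ)) = c₃ * M₀ * 2 ^ (-H * ℓ) + c₃ * 4 ^ ℓ := by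
    rw [mul_mul_mul_comm, ← rpow_add two_pos, rpow_mul_natCast zero_le_two 2]
    ring_nf
  calc ∑ ℓ ∈ range n, ⌈M₀ * 2 ^ (-(2 + H) * (ℓ : ℝ))⌉₊ * C ℓ
      ≤ ∑ ℓ ∈ range n, (c₃ * M₀ * 2 ^ (-H * ℓ) + c₃ * 4 ^ ℓ) := sum_le_sum fun ℓ _ =>
        (natCeil_mul_le (by positivity) (hC ℓ).1 (hC ℓ).2).trans_eq (hsplit ℓ)
    _ = c₃ * M₀ * ∑ ℓ ∈ range n, (2 : ℝ) ^ (-H * ℓ) + c₃ * ∑ ℓ ∈ range n, (4 : ℝ) ^ ℓ := by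
      rw [sum_add_distrib, mul_sum, mul_sum]
    _ ≤ c₃ * M₀ * (1 - 2 ^ (-H))⁻¹ + c₃ * (4 ^ n / 3) := by
      gcongr
      · exact sum_two_rpow_neg_mul_le hH n
      · exact (geom_sum_le_pow_div_sub_one (by norm_num) n).trans_eq (by norm_num)

end Multilevel

theorem mlmc_complexity_trapezoidal_general (H c₁ c₂ c₃ : ℝ) (hH : H ∈ Set.Ioo (0 : ℝ) 1)
    (hc₂ : 0 < c₂) (hc₃ : 0 < c₃)
    (bias V C : ℕ → ℝ)
    (hbias : ∀ ℓ : ℕ, |bias ℓ| ≤ c₁ * 2 ^ (-(1 + H) * (ℓ : ℝ)))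
    (hV : ∀ ℓ : ℕ, 0 ≤ V ℓ ∧ V ℓ ≤ c₂ * 2 ^ (-2 * (1 + H) * (ℓ : ℝ)))
    (hC : ∀ ℓ : ℕ, 0 ≤ C ℓ ∧ C ℓ ≤ c₃ * 2 ^ (2 * (ℓ : ℝ))) :
    ∃ A > 0, ∀ ε : ℝ, 0 < ε →
      ∃ (L : ℕ) (M₀ : ℝ) (M : ℕ → ℕ), 0 < M₀ ∧
        (∀ ℓ : ℕ, M ℓ = ⌈M₀ * 2 ^ (-(2 + H) * (ℓ : ℝ))⌉₊) ∧
        (bias L) ^ 2 + ∑ ℓ ∈ Finset.range (L + 1), V ℓ / (M ℓ : ℝ) ≤ ε ^ 2 ∧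
        ∑ ℓ ∈ Finset.range (L + 1), (M ℓ : ℝ) * C ℓ ≤ A * (1 + ε⁻¹ ^ 2) := by
  set S : ℝ := (1 - 2 ^ (-H))⁻¹
  have hS : 0 < S := inv_pos.2 <| sub_pos.2 <|
    rpow_lt_one_of_one_lt_of_neg one_lt_two (neg_neg_of_pos hH.1)
  refine ⟨2 * c₂ * c₃ * S ^ 2 + 16 / 3 * c₃ * (1 + 2 * c₁ ^ 2), by positivity, fun ε hε => ?_⟩
  obtain ⟨L, hbias_sq, hfour_pow⟩ := exists_sq_div_four_pow_le (c := c₁) hε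
  set M₀ := 2 * c₂ * S * ε⁻¹ ^ 2 with hM₀
  refine ⟨L, M₀, _, by positivity, fun _ => rfl, ?_, ?_⟩
  · have hvar : c₂ * S / M₀ = ε ^ 2 / 2 := by
      rw [hM₀]
      field_simp
    calc bias L ^ 2 + ∑ ℓ ∈ range (L + 1), V ℓ / ⌈M₀ * 2 ^ (-(2 + H) * (ℓ : ℝ))⌉₊
        ≤ c₁ ^ 2 / 4 ^ L + c₂ * S / M₀ :=
          add_le_add (sq_le_div_four_pow hH.1.le (hbias L))
            (sum_div_natCeil_le hH.1 hc₂.le (by positivity) hV _)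
      _ ≤ ε ^ 2 := by linarith
  · calc ∑ ℓ ∈ range (L + 1), ⌈M₀ * 2 ^ (-(2 + H) * (ℓ : ℝ))⌉₊ * C ℓ
        ≤ c₃ * M₀ * S + c₃ * (4 ^ (L + 1) / 3) :=
          sum_natCeil_mul_le hH.1 hc₃.le (by positivity) hC _
      _ ≤ _ := by
          have hslack : 0 ≤ 2 * c₂ * c₃ * S ^ 2 + 32 / 3 * c₃ * c₁ ^ 2 + 16 / 3 * c₃ * ε⁻¹ ^ 2 := by
            positivity
          rw [hM₀]
          linear_combination hslack + mul_le_mul_of_nonneg_left hfour_pow hc₃.le / 3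

/-- Multilevel Monte Carlo complexity theorem, case `α = 1+H`, `β = 2(1+H) > γ = 2`,
`H ∈ (0,1)`: if the level-`ℓ` approximations satisfy `|E[P_ℓ - P]| ≤ c₁ 2^{-(1+H)ℓ}`,
`V_ℓ ≤ c₂ 2^{-2(1+H)ℓ}` and `C_ℓ ≤ c₃ 2^{2ℓ}`, then for every `ε > 0` there is a
number of levels `L` and sample sizes `M_ℓ = ⌈M₀ 2^{-(2+H)ℓ}⌉` such that the
multilevel estimator has mean-squared error `(bias L)² + ∑_{ℓ=0}^L V_ℓ/M_ℓ ≤ ε²`,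
with total cost `∑_{ℓ=0}^L M_ℓ C_ℓ = O(ε^{-2})` as `ε → 0`. -/
theorem mlmc_complexity_trapezoidal (H c₁ c₂ c₃ : ℝ) (hH : H ∈ Set.Ioo (0 : ℝ) 1)
    (hc₁ : 0 < c₁) (hc₂ : 0 < c₂) (hc₃ : 0 < c₃)
    (bias V C : ℕ → ℝ)
    (hbias : ∀ ℓ : ℕ, |bias ℓ| ≤ c₁ * 2 ^ (-(1 + H) * (ℓ : ℝ)))
    (hV : ∀ ℓ : ℕ, 0 ≤ V ℓ ∧ V ℓ ≤ c₂ * 2 ^ (-2 * (1 + H) * (ℓ : ℝ)))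
    (hC : ∀ ℓ : ℕ, 0 ≤ C ℓ ∧ C ℓ ≤ c₃ * 2 ^ (2 * (ℓ : ℝ))) :
    ∃ A > 0, ∀ ε : ℝ, 0 < ε →
      ∃ (L : ℕ) (M₀ : ℝ) (M : ℕ → ℕ), 0 < M₀ ∧
        (∀ ℓ : ℕ, M ℓ = ⌈M₀ * 2 ^ (-(2 + H) * (ℓ : ℝ))⌉₊) ∧
        (bias L) ^ 2 + ∑ ℓ ∈ Finset.range (L + 1), V ℓ / (M ℓ : ℝ) ≤ ε ^ 2 ∧
        ∑ ℓ ∈ Finset.range (L + 1), (M ℓ : ℝ) * C ℓ ≤ A * (1 + ε⁻¹ ^ 2) :=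
  mlmc_complexity_trapezoidal_general H c₁ c₂ c₃ hH hc₂ hc₃ bias V C hbias hV hC
end
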